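/- arXiv:math/0506225 — 2 statements merged into one kernel-verified Lean document; each statement's English description precedes it below -/
import Mathlib

section
/- Let ε > 0 and δ satisfy 0 < δ < (1 - 2^{-ε})/2, and let (a_k) be a sequence of nonnegative reals such that for some S ≥ 0: a_k ≤ 1 for all k ≥ S, and a_k ≤ 2^{-εk} + δ · Σ_{j≥0} a_j · 2^{-2ε|k-j|} for all k ≥ S. Then there exists a constant M ≥ 0 (depending on ε, δ, S, and the sup-norm of (a_k)) such that a_k ≤ M · 2^{-εk} for all k ≥ 0. -/
open Finset Filter

/-- Summability of `x ^ Nat.dist k j` in `j`. -/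
lemma aux_summable_dist {x : ℝ} (hx0 : 0 ≤ x) (hx1 : x < 1) (k : ℕ) :
    Summable (fun j : ℕ => x ^ Nat.dist k j) := by
  rw [← summable_nat_add_iff (k + 1)]
  have : (fun m : ℕ => x ^ Nat.dist k (m + (k + 1))) = fun m : ℕ => x * x ^ m := by
    funext m
    have hd : Nat.dist k (m + (k + 1)) = m + 1 := by
      rw [Nat.dist_eq_sub_of_le (by omega)]; omega
    rw [hd, pow_succ, mul_comm]
  rw [this]
  exact (summable_geometric_of_lt_one hx0 hx1).mul_left x

/-- The geometric-distance sum bound. -/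
lemma aux_tsum_dist_le {x : ℝ} (hx0 : 0 ≤ x) (hx1 : x < 1) (k : ℕ) :
    (∑' j : ℕ, x ^ Nat.dist k j) ≤ 2 * (1 - x)⁻¹ := by
  have hsum := aux_summable_dist hx0 hx1 k
  have hgeo := summable_geometric_of_lt_one hx0 hx1
  rw [← Summable.sum_add_tsum_nat_add (k + 1) hsum]
  have h1 : (∑ i ∈ range (k + 1), x ^ Nat.dist k i) ≤ (1 - x)⁻¹ := by
    have he : (∑ i ∈ range (k + 1), x ^ Nat.dist k i) = ∑ i ∈ range (k + 1), x ^ i := by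
      rw [← Finset.sum_range_reflect (fun i => x ^ i) (k + 1)]
      refine Finset.sum_congr rfl fun i hi => ?_
      rw [Finset.mem_range] at hi
      rw [Nat.dist_eq_sub_of_le_right (by omega)]
      congr 1 <;> omega
    rw [he, ← tsum_geometric_of_lt_one hx0 hx1]
    exact Summable.sum_le_tsum _ (fun i _ => pow_nonneg hx0 i) hgeo
  have h2 : (∑' m : ℕ, x ^ Nat.dist k (m + (k + 1))) ≤ (1 - x)⁻¹ := by
    have he : (fun m : ℕ => x ^ Nat.dist k (m + (k + 1))) = fun m : ℕ => x * x ^ m := by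
      funext m
      have hd : Nat.dist k (m + (k + 1)) = m + 1 := by
        rw [Nat.dist_eq_sub_of_le (by omega)]; omega
      rw [hd, pow_succ, mul_comm]
    rw [he, tsum_mul_left, tsum_geometric_of_lt_one hx0 hx1]
    calc x * (1 - x)⁻¹ ≤ 1 * (1 - x)⁻¹ := by
          exact mul_le_mul_of_nonneg_right hx1.le (inv_nonneg.2 (by linarith))
      _ = (1 - x)⁻¹ := one_mul _
  linarith

/-- Iteration lemma for sequences (Lemma 2 of the paper). -/
theorem stmt_0 (ε δ : ℝ) (hε : 0 < ε) (hδ : 0 < δ) (hδ' : δ < (1 - 2 ^ (-ε)) / 2)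
    (a : ℕ → ℝ) (ha : ∀ k, 0 ≤ a k) (B : ℝ) (hB : ∀ k, a k ≤ B) (S : ℕ)
    (h1 : ∀ k, S ≤ k → a k ≤ 1)
    (h2 : ∀ k, S ≤ k →
      a k ≤ 2 ^ (-ε * k) + δ * ∑' j : ℕ, a j * 2 ^ (-2 * ε * |(k : ℝ) - (j : ℝ)|)) :
    ∃ M : ℝ, 0 ≤ M ∧ ∀ k : ℕ, a k ≤ M * 2 ^ (-ε * k) := by
  set r : ℝ := 2 ^ (-ε) with hrdef
  have hr0 : 0 < r := Real.rpow_pos_of_pos two_pos _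
  have hr1 : r < 1 := Real.rpow_lt_one_of_one_lt_of_neg one_lt_two (by linarith)
  have hB0 : 0 ≤ B := le_trans (ha 0) (hB 0)
  have h1r : 0 < 1 - r := by linarith
  -- rpow to pow conversions
  have hrk : ∀ k : ℕ, (2 : ℝ) ^ (-ε * (k : ℝ)) = r ^ k := by
    intro k
    rw [hrdef, ← Real.rpow_natCast ((2 : ℝ) ^ (-ε)) k, ← Real.rpow_mul (by norm_num)]
  set s : ℝ := r ^ 2 with hsdef
  have hs0 : 0 ≤ s := by positivity
  have hs1 : s < 1 := by nlinarith
  have hsr : s ≤ r := by nlinarith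
  have hsd : ∀ k j : ℕ, (2 : ℝ) ^ (-2 * ε * |(k : ℝ) - (j : ℝ)|) = s ^ Nat.dist k j := by
    intro k j
    have habs : |(k : ℝ) - (j : ℝ)| = (Nat.dist k j : ℝ) := by
      rcases le_total j k with h | h
      · rw [Nat.dist_eq_sub_of_le_right h, Nat.cast_sub h, abs_of_nonneg]
        have : (j : ℝ) ≤ (k : ℝ) := Nat.cast_le.2 h
        linarith
      · rw [Nat.dist_eq_sub_of_le h, Nat.cast_sub h, abs_of_nonpos]
        · ring
        · have : (k : ℝ) ≤ (j : ℝ) := Nat.cast_le.2 h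
          linarith
    have hs2 : s = (2 : ℝ) ^ (-2 * ε) := by
      rw [hsdef, hrdef, ← Real.rpow_natCast ((2 : ℝ) ^ (-ε)) 2, ← Real.rpow_mul (by norm_num)]
      norm_num
      ring_nf
    rw [habs, hs2, ← Real.rpow_natCast ((2 : ℝ) ^ (-2 * ε)) (Nat.dist k j),
      ← Real.rpow_mul (by norm_num)]
  -- constants
  set c : ℝ := 2 * (1 - r)⁻¹ with hcdef
  have hc0 : 0 < c := by positivity
  set q : ℝ := δ * c with hqdef
  have hq0 : 0 < q := by positivity
  have hq1 : q < 1 := by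
    have h := mul_lt_mul_of_pos_right (show 2 * δ < 1 - r by linarith) (inv_pos.2 h1r)
    rw [mul_inv_cancel₀ h1r.ne'] at h
    rw [hqdef, hcdef]; linarith
  have hrS : (0 : ℝ) < r ^ S := pow_pos hr0 S
  set D : ℝ := B * S / r ^ S with hDdef
  have hD0 : 0 ≤ D := by positivity
  set u : ℝ := (1 + δ * D) / (1 - q) with hudef
  have hu0 : 0 ≤ u := by
    apply div_nonneg (by positivity) (by linarith)
  have hu' : 1 + δ * D = u * (1 - q) := by
    rw [hudef, div_mul_cancel₀]; linarith
  -- the key iteration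
  have key : ∀ n : ℕ, ∀ k : ℕ, S ≤ k → a k ≤ u * r ^ k + q ^ n := by
    intro n
    induction n with
    | zero =>
      intro k hk
      have : (0 : ℝ) ≤ u * r ^ k := by positivity
      simpa using le_trans (h1 k hk) (by linarith)
    | succ n IH =>
      intro k hk
      set w : ℕ → ℝ := fun j => s ^ Nat.dist k j with hwdef
      have hw0 : ∀ j, 0 ≤ w j := fun j => pow_nonneg hs0 _
      have hSw : Summable w := aux_summable_dist hs0 hs1 k
      have hSw2 : Summable (fun j : ℕ => r ^ k * r ^ Nat.dist k j) :=
        (aux_summable_dist hr0.le hr1 k).mul_left _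
      -- pointwise bound for the middle sum
      have hmid_pt : ∀ j : ℕ, r ^ j * w j ≤ r ^ k * r ^ Nat.dist k j := by
        intro j
        have hd : k + Nat.dist k j ≤ j + 2 * Nat.dist k j := by
          simp only [Nat.dist]; omega
        calc r ^ j * w j = r ^ (j + 2 * Nat.dist k j) := by
              simp only [hwdef, hsdef]
              rw [← pow_mul, ← pow_add]
          _ ≤ r ^ (k + Nat.dist k j) :=
              pow_le_pow_of_le_one hr0.le hr1.le hd
          _ = r ^ k * r ^ Nat.dist k j := pow_add r _ _
      have hSmid : Summable (fun j : ℕ => r ^ j * w j) := by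
        apply Summable.of_nonneg_of_le (fun j => by positivity) hmid_pt hSw2
      have hmid : (∑' j : ℕ, r ^ j * w j) ≤ r ^ k * (2 * (1 - r)⁻¹) := by
        calc (∑' j : ℕ, r ^ j * w j) ≤ ∑' j : ℕ, r ^ k * r ^ Nat.dist k j :=
              Summable.tsum_le_tsum hmid_pt hSmid hSw2
          _ = r ^ k * ∑' j : ℕ, r ^ Nat.dist k j := tsum_mul_left
          _ ≤ r ^ k * (2 * (1 - r)⁻¹) := by
              exact mul_le_mul_of_nonneg_left (aux_tsum_dist_le hr0.le hr1 k) (by positivity)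
      -- head (j < S) part
      have hhead_pt : ∀ j : ℕ, j < S → B * w j ≤ B * (r ^ k / r ^ S) := by
        intro j hj
        apply mul_le_mul_of_nonneg_left _ hB0
        have h1' : w j ≤ r ^ Nat.dist k j := pow_le_pow_left₀ hs0 hsr _
        have h2' : r ^ Nat.dist k j ≤ r ^ (k - S) := by
          apply pow_le_pow_of_le_one hr0.le hr1.le
          rw [Nat.dist_eq_sub_of_le_right (le_trans hj.le hk)]
          omega
        have h3' : r ^ (k - S) = r ^ k / r ^ S := by
          rw [eq_div_iff hrS.ne', ← pow_add]
          congr 1; omega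
        calc w j ≤ r ^ Nat.dist k j := h1'
          _ ≤ r ^ (k - S) := h2'
          _ = r ^ k / r ^ S := h3'
      set A : ℕ → ℝ := fun j => if j < S then B * w j else 0 with hAdef
      have hA0 : ∀ j, 0 ≤ A j := by
        intro j; rw [hAdef]; dsimp only
        split
        · exact mul_nonneg hB0 (hw0 j)
        · exact le_refl 0
      have hSA : Summable A := by
        apply summable_of_ne_finset_zero (s := Finset.range S)
        intro j hj
        rw [Finset.mem_range, not_lt] at hj
        simp [hAdef, Nat.not_lt.2 hj]
      have hhead : (∑' j : ℕ, A j) ≤ D * r ^ k := by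
        have he : (∑' j : ℕ, A j) = ∑ j ∈ Finset.range S, A j := by
          apply tsum_eq_sum
          intro j hj
          rw [Finset.mem_range, not_lt] at hj
          simp [hAdef, Nat.not_lt.2 hj]
        rw [he]
        calc (∑ j ∈ Finset.range S, A j) ≤ ∑ _j ∈ Finset.range S, B * (r ^ k / r ^ S) := by
              apply Finset.sum_le_sum
              intro j hj
              rw [Finset.mem_range] at hj
              simp only [hAdef, if_pos hj]
              exact hhead_pt j hj
          _ = S * (B * (r ^ k / r ^ S)) := by
              rw [Finset.sum_const, Finset.card_range, nsmul_eq_mul]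
          _ = D * r ^ k := by rw [hDdef]; field_simp
      -- tail summand with q^n
      have hSq : Summable (fun j : ℕ => q ^ n * w j) := hSw.mul_left _
      have htail : (∑' j : ℕ, q ^ n * w j) ≤ q ^ n * (2 * (1 - s)⁻¹) := by
        rw [tsum_mul_left]
        exact mul_le_mul_of_nonneg_left (aux_tsum_dist_le hs0 hs1 k) (by positivity)
      have hcs : (2 * (1 - s)⁻¹ : ℝ) ≤ c := by
        rw [hcdef]
        have : (1 - s)⁻¹ ≤ (1 - r)⁻¹ := by
          apply inv_anti₀ h1r
          linarith
        linarith
      -- combine: pointwise majorant h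
      set g : ℕ → ℝ := fun j => A j + (u * (r ^ j * w j) + q ^ n * w j) with hgdef
      have hSg : Summable g := hSA.add ((hSmid.mul_left u).add hSq)
      have hpt : ∀ j : ℕ, a j * w j ≤ g j := by
        intro j
        rw [hgdef]; dsimp only
        by_cases hj : j < S
        · rw [hAdef]; dsimp only; rw [if_pos hj]
          have : a j * w j ≤ B * w j := mul_le_mul_of_nonneg_right (hB j) (hw0 j)
          have h2 : 0 ≤ u * (r ^ j * w j) := by positivity
          have h3 : 0 ≤ q ^ n * w j := by positivity
          linarith
        · rw [hAdef]; dsimp only; rw [if_neg hj]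
          push_neg at hj
          have hIH := IH j hj
          have : a j * w j ≤ (u * r ^ j + q ^ n) * w j :=
            mul_le_mul_of_nonneg_right hIH (hw0 j)
          calc a j * w j ≤ (u * r ^ j + q ^ n) * w j := this
            _ = 0 + (u * (r ^ j * w j) + q ^ n * w j) := by ring
      have hSaw : Summable (fun j : ℕ => a j * w j) :=
        Summable.of_nonneg_of_le (fun j => mul_nonneg (ha j) (hw0 j)) hpt hSg
      have hT : (∑' j : ℕ, a j * w j) ≤ D * r ^ k + (u * (r ^ k * (2 * (1 - r)⁻¹)) + q ^ n * c) := by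
        calc (∑' j : ℕ, a j * w j) ≤ ∑' j : ℕ, g j := Summable.tsum_le_tsum hpt hSaw hSg
          _ = (∑' j : ℕ, A j) + ∑' j : ℕ, (u * (r ^ j * w j) + q ^ n * w j) := by
              rw [hgdef]; exact Summable.tsum_add hSA ((hSmid.mul_left u).add hSq)
          _ = (∑' j : ℕ, A j) + ((∑' j : ℕ, u * (r ^ j * w j)) + ∑' j : ℕ, q ^ n * w j) := by
              rw [Summable.tsum_add (hSmid.mul_left u) hSq]
          _ ≤ D * r ^ k + (u * (r ^ k * (2 * (1 - r)⁻¹)) + q ^ n * (2 * (1 - s)⁻¹)) := by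
              refine add_le_add hhead (add_le_add ?_ htail)
              rw [tsum_mul_left]
              exact mul_le_mul_of_nonneg_left hmid hu0
          _ ≤ D * r ^ k + (u * (r ^ k * (2 * (1 - r)⁻¹)) + q ^ n * c) := by
              have : q ^ n * (2 * (1 - s)⁻¹) ≤ q ^ n * c :=
                mul_le_mul_of_nonneg_left hcs (by positivity)
              linarith
      -- plug into h2
      have hmain := h2 k hk
      rw [hrk k] at hmain
      have htsum_eq : (∑' j : ℕ, a j * (2 : ℝ) ^ (-2 * ε * |(k : ℝ) - (j : ℝ)|))
          = ∑' j : ℕ, a j * w j := by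
        apply tsum_congr; intro j; rw [hsd k j]
      rw [htsum_eq] at hmain
      have step : a k ≤ r ^ k + δ * (D * r ^ k + (u * (r ^ k * (2 * (1 - r)⁻¹)) + q ^ n * c)) := by
        have := mul_le_mul_of_nonneg_left hT hδ.le
        linarith
      have halg : r ^ k + δ * (D * r ^ k + (u * (r ^ k * (2 * (1 - r)⁻¹)) + q ^ n * c))
          = u * r ^ k + q ^ (n + 1) := by
        rw [pow_succ, ← hcdef]
        have hqq : q = δ * c := hqdef
        linear_combination (r ^ k) * hu' - (u * r ^ k + q ^ n) * hqq
      linarith [step, le_of_eq halg]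
  -- pass to the limit in n
  have hfin : ∀ k : ℕ, S ≤ k → a k ≤ u * r ^ k := by
    intro k hk
    have hlim : Tendsto (fun n : ℕ => u * r ^ k + q ^ n) atTop (nhds (u * r ^ k + 0)) :=
      tendsto_const_nhds.add (tendsto_pow_atTop_nhds_zero_of_lt_one hq0.le hq1)
    have := ge_of_tendsto' hlim (fun n => key n k hk)
    simpa using this
  refine ⟨max u (B / r ^ S), le_trans hu0 (le_max_left _ _), ?_⟩
  intro k
  rw [hrk k]
  by_cases hk : S ≤ k
  · calc a k ≤ u * r ^ k := hfin k hk
      _ ≤ max u (B / r ^ S) * r ^ k :=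
        mul_le_mul_of_nonneg_right (le_max_left _ _) (pow_nonneg hr0.le k)
  · push_neg at hk
    have h1' : r ^ S ≤ r ^ k := pow_le_pow_of_le_one hr0.le hr1.le hk.le
    have h2' : a k ≤ B := hB k
    have h3' : B = (B / r ^ S) * r ^ S := by field_simp
    calc a k ≤ B := h2'
      _ = (B / r ^ S) * r ^ S := h3'
      _ ≤ (B / r ^ S) * r ^ k := mul_le_mul_of_nonneg_left h1' (div_nonneg hB0 hrS.le)
      _ ≤ max u (B / r ^ S) * r ^ k :=
        mul_le_mul_of_nonneg_right (le_max_right _ _) (pow_nonneg hr0.le k)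
end

section
/- Let ε > 0, δ > 0 with δ·C_ε < 1 where C_ε = 2/(1-2^{-ε}), A > 0, and S ≥ 0. Suppose a nonnegative sequence (a_k) satisfies: a_k ≤ A·2^{-εk} + δ·Σ_{j≥S} a_j · 2^{-2ε|k-j|} for all k ≥ S, and a_k ≤ 1 for k ≥ S. Then for every k ≥ S and every N ≥ 0, a_k ≤ A·2^{-εk}·(1 + δC_ε + ... + (δC_ε)^N) + (δC_ε)^{N+1}. -/
open Real Finset

lemma aux_summable {c : ℝ} (hc0 : 0 < c) (hc1 : c < 1) (d : ℕ) :
    Summable (fun m : ℕ => c ^ |(m : ℝ) - d|) := by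
  apply Summable.of_nonneg_of_le (fun m => (rpow_pos_of_pos hc0 _).le)
    (fun m => ?_) (((summable_geometric_of_lt_one hc0.le hc1).mul_left (c ^ (-(d:ℝ)))))
  calc c ^ |(m:ℝ) - d| ≤ c ^ ((m:ℝ) - d) :=
        rpow_le_rpow_of_exponent_ge hc0 hc1.le (le_abs_self _)
    _ = c ^ (-(d:ℝ)) * c ^ m := by
        rw [← rpow_natCast c m, ← rpow_add hc0]; ring_nf

lemma aux_tsum {c : ℝ} (hc0 : 0 < c) (hc1 : c < 1) (d : ℕ) :
    ∑' m : ℕ, c ^ |(m : ℝ) - d| ≤ 2 / (1 - c) := by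
  have hs := aux_summable hc0 hc1 d
  rw [← Summable.sum_add_tsum_nat_add d hs]
  have h1c : 0 < 1 - c := by linarith
  have htail : ∑' n : ℕ, c ^ |((n + d : ℕ) : ℝ) - d| = (1 - c)⁻¹ := by
    rw [← tsum_geometric_of_lt_one hc0.le hc1]
    apply tsum_congr
    intro n
    rw [← rpow_natCast c n]
    congr 1
    push_cast
    have h : (n:ℝ) + d - d = n := by ring
    rw [h, abs_of_nonneg (Nat.cast_nonneg n)]
  have hfin : ∑ m ∈ range d, c ^ |((m : ℕ) : ℝ) - d| ≤ (1 - c)⁻¹ := by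
    have he : ∀ m ∈ range d, c ^ |((m : ℕ) : ℝ) - d| = c ^ (d - m : ℕ) := by
      intro m hm
      rw [mem_range] at hm
      rw [abs_of_nonpos (by have := (Nat.cast_lt (α:=ℝ)).mpr hm; linarith), ← rpow_natCast c (d - m)]
      congr 1
      push_cast [Nat.cast_sub hm.le]
      ring
    rw [Finset.sum_congr rfl he, ← Finset.sum_range_reflect]
    have : ∀ j ∈ range d, c ^ (d - (d - 1 - j) : ℕ) ≤ c ^ (j+1) := by
      intro j hj
      rw [mem_range] at hj
      have : d - (d - 1 - j) = j + 1 := by omega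
      rw [this]
    calc ∑ j ∈ range d, c ^ (d - (d - 1 - j) : ℕ) ≤ ∑ j ∈ range d, c ^ (j + 1) :=
          Finset.sum_le_sum this
      _ ≤ ∑' j : ℕ, c ^ (j + 1) := by
          apply Summable.sum_le_tsum _ (fun i _ => by positivity)
          exact ((summable_geometric_of_lt_one hc0.le hc1).comp_injective (add_left_injective 1))
      _ ≤ ∑' j : ℕ, c ^ j := by
          apply Summable.tsum_le_tsum _ ((summable_geometric_of_lt_one hc0.le hc1).comp_injective (add_left_injective 1)) (summable_geometric_of_lt_one hc0.le hc1)
          intro j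
          exact pow_le_pow_of_le_one hc0.le hc1.le (Nat.le_succ j)
      _ = (1 - c)⁻¹ := tsum_geometric_of_lt_one hc0.le hc1
  calc ∑ m ∈ range d, c ^ |((m:ℕ) : ℝ) - d| + ∑' n : ℕ, c ^ |((n + d : ℕ) : ℝ) - d|
      ≤ (1-c)⁻¹ + (1-c)⁻¹ := by rw [htail]; exact add_le_add_left hfin _
    _ = 2 / (1 - c) := by field_simp; ring

lemma abs_shift {S k : ℕ} (hk : S ≤ k) (m : ℕ) :
    |((S + m : ℕ) : ℝ) - (k : ℝ)| = |(m : ℝ) - ((k - S : ℕ) : ℝ)| := by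
  congr 1
  push_cast [Nat.cast_sub hk]
  ring

lemma helper_summable {e : ℝ} (he : e < 0) {S k : ℕ} (hk : S ≤ k) :
    Summable (fun m : ℕ => (2:ℝ) ^ (e * |((S + m : ℕ) : ℝ) - (k : ℝ)|)) := by
  have hc0 : (0:ℝ) < 2 ^ e := rpow_pos_of_pos two_pos e
  have hc1 : (2:ℝ) ^ e < 1 := rpow_lt_one_of_one_lt_of_neg one_lt_two he
  apply (aux_summable hc0 hc1 (k - S)).congr
  intro m
  rw [← Real.rpow_mul (by norm_num : (0:ℝ) ≤ 2), abs_shift hk m]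

lemma helper_tsum {e : ℝ} (he : e < 0) {S k : ℕ} (hk : S ≤ k) :
    ∑' m : ℕ, (2:ℝ) ^ (e * |((S + m : ℕ) : ℝ) - (k : ℝ)|) ≤ 2 / (1 - 2 ^ e) := by
  have hc0 : (0:ℝ) < 2 ^ e := rpow_pos_of_pos two_pos e
  have hc1 : (2:ℝ) ^ e < 1 := rpow_lt_one_of_one_lt_of_neg one_lt_two he
  calc ∑' m : ℕ, (2:ℝ) ^ (e * |((S + m : ℕ) : ℝ) - (k : ℝ)|)
      = ∑' m : ℕ, ((2:ℝ) ^ e) ^ |(m : ℝ) - ((k - S : ℕ) : ℝ)| := by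
        apply tsum_congr
        intro m
        rw [abs_shift hk m, ← Real.rpow_mul (by norm_num : (0:ℝ) ≤ 2)]
    _ ≤ 2 / (1 - 2 ^ e) := aux_tsum hc0 hc1 _

lemma key_pt (ε : ℝ) (hε : 0 < ε) (j k : ℕ) :
    (2:ℝ) ^ (-ε * (j:ℝ)) * 2 ^ (-2 * ε * |(j:ℝ) - (k:ℝ)|) ≤
      2 ^ (-ε * (k:ℝ)) * 2 ^ (-ε * |(j:ℝ) - (k:ℝ)|) := by
  rw [← Real.rpow_add two_pos, ← Real.rpow_add two_pos]
  apply rpow_le_rpow_of_exponent_le one_le_two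
  have h1 : (k:ℝ) - j ≤ |(j:ℝ) - k| := by
    rw [abs_sub_comm]; exact le_abs_self _
  have h2 : 0 ≤ |(j:ℝ) - k| := abs_nonneg _
  nlinarith


/-- Iterated estimate: `a_k ≤ A 2^{-εk} (1 + δC_ε + ⋯ + (δC_ε)^N) + (δC_ε)^{N+1}`. -/
theorem stmt_3 (ε δ A : ℝ) (hε : 0 < ε) (hδ : 0 < δ) (hA : 0 < A)
    (hδC : δ * (2 / (1 - 2 ^ (-ε))) < 1) (S : ℕ) (a : ℕ → ℝ) (ha : ∀ k, 0 ≤ a k)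
    (h1 : ∀ k, S ≤ k → a k ≤ 1)
    (h2 : ∀ k, S ≤ k →
      a k ≤ A * 2 ^ (-ε * k) +
        δ * ∑' m : ℕ, a (S + m) * 2 ^ (-2 * ε * |((S + m : ℕ) : ℝ) - (k : ℝ)|)) :
    ∀ k, S ≤ k → ∀ N : ℕ,
      a k ≤ A * 2 ^ (-ε * k) * (∑ m ∈ Finset.range (N + 1), (δ * (2 / (1 - 2 ^ (-ε)))) ^ m) +
        (δ * (2 / (1 - 2 ^ (-ε)))) ^ (N + 1) := by
  have hc0 : (0:ℝ) < 2 ^ (-ε) := rpow_pos_of_pos two_pos _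
  have hc1 : (2:ℝ) ^ (-ε) < 1 := rpow_lt_one_of_one_lt_of_neg one_lt_two (by linarith)
  have hCpos : (0:ℝ) < 2 / (1 - 2 ^ (-ε)) := div_pos two_pos (by linarith)
  set C : ℝ := 2 / (1 - 2 ^ (-ε)) with hCdef
  set q : ℝ := δ * C with hqdef
  have hq0 : 0 < q := mul_pos hδ hCpos
  have h2e : (-2 : ℝ) * ε < 0 := by linarith
  have hC2 : 2 / (1 - 2 ^ (-2 * ε)) ≤ C := by
    have h22 : (2:ℝ) ^ (-2 * ε) ≤ 2 ^ (-ε) := rpow_le_rpow_of_exponent_le one_le_two (by linarith)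
    have hlt : (2:ℝ) ^ (-2 * ε) < 1 := rpow_lt_one_of_one_lt_of_neg one_lt_two h2e
    rw [hCdef]
    gcongr 2 / ?_ <;> linarith
  suffices H : ∀ N : ℕ, ∀ k, S ≤ k →
      a k ≤ A * 2 ^ (-ε * k) * (∑ m ∈ Finset.range (N + 1), q ^ m) + q ^ (N + 1) from
    fun k hk N => H N k hk
  intro N
  induction N with
  | zero =>
    intro k hk
    have hw : Summable (fun m : ℕ => (2:ℝ) ^ (-2 * ε * |((S + m : ℕ) : ℝ) - (k : ℝ)|)) :=
      helper_summable h2e hk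
    have haw : Summable (fun m : ℕ => a (S + m) * (2:ℝ) ^ (-2 * ε * |((S + m : ℕ) : ℝ) - (k : ℝ)|)) :=
      Summable.of_nonneg_of_le (fun m => mul_nonneg (ha _) (rpow_pos_of_pos two_pos _).le)
        (fun m => mul_le_of_le_one_left (rpow_pos_of_pos two_pos _).le (h1 _ (Nat.le_add_right S m))) hw
    have hT : ∑' m : ℕ, a (S + m) * (2:ℝ) ^ (-2 * ε * |((S + m : ℕ) : ℝ) - (k : ℝ)|) ≤ C := by
      calc ∑' m : ℕ, a (S + m) * (2:ℝ) ^ (-2 * ε * |((S + m : ℕ) : ℝ) - (k : ℝ)|)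
          ≤ ∑' m : ℕ, (2:ℝ) ^ (-2 * ε * |((S + m : ℕ) : ℝ) - (k : ℝ)|) :=
            Summable.tsum_le_tsum (fun m => mul_le_of_le_one_left (rpow_pos_of_pos two_pos _).le
              (h1 _ (Nat.le_add_right S m))) haw hw
        _ ≤ 2 / (1 - 2 ^ (-2 * ε)) := helper_tsum h2e hk
        _ ≤ C := hC2
    calc a k ≤ A * 2 ^ (-ε * k) +
          δ * ∑' m : ℕ, a (S + m) * (2:ℝ) ^ (-2 * ε * |((S + m : ℕ) : ℝ) - (k : ℝ)|) := h2 k hk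
      _ ≤ A * 2 ^ (-ε * k) + δ * C := by
          have : δ * ∑' m : ℕ, a (S + m) * (2:ℝ) ^ (-2 * ε * |((S + m : ℕ) : ℝ) - (k : ℝ)|) ≤ δ * C :=
            mul_le_mul_of_nonneg_left hT hδ.le
          linarith
      _ = A * 2 ^ (-ε * k) * (∑ m ∈ Finset.range (0 + 1), q ^ m) + q ^ (0 + 1) := by
          rw [Finset.sum_range_one]
          ring
  | succ N ih =>
    intro k hk
    have hεneg : -ε < 0 := by linarith
    have hw : Summable (fun m : ℕ => (2:ℝ) ^ (-2 * ε * |((S + m : ℕ) : ℝ) - (k : ℝ)|)) :=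
      helper_summable h2e hk
    have hv : Summable (fun m : ℕ => (2:ℝ) ^ (-ε * |((S + m : ℕ) : ℝ) - (k : ℝ)|)) :=
      helper_summable hεneg hk
    set P : ℝ := ∑ m ∈ Finset.range (N + 1), q ^ m with hPdef
    have hP0 : 0 ≤ P := Finset.sum_nonneg fun _ _ => (pow_pos hq0 _).le
    have hkey : ∀ m : ℕ, (2:ℝ) ^ (-ε * ((S + m : ℕ) : ℝ)) * 2 ^ (-2 * ε * |((S + m : ℕ) : ℝ) - (k : ℝ)|) ≤
        2 ^ (-ε * (k:ℝ)) * 2 ^ (-ε * |((S + m : ℕ) : ℝ) - (k : ℝ)|) := fun m => key_pt ε hε (S + m) k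
    have hu : Summable (fun m : ℕ => (2:ℝ) ^ (-ε * ((S + m : ℕ) : ℝ)) * 2 ^ (-2 * ε * |((S + m : ℕ) : ℝ) - (k : ℝ)|)) :=
      Summable.of_nonneg_of_le (fun m => by positivity) hkey (hv.mul_left _)
    have haw : Summable (fun m : ℕ => a (S + m) * (2:ℝ) ^ (-2 * ε * |((S + m : ℕ) : ℝ) - (k : ℝ)|)) :=
      Summable.of_nonneg_of_le (fun m => mul_nonneg (ha _) (rpow_pos_of_pos two_pos _).le)
        (fun m => mul_le_of_le_one_left (rpow_pos_of_pos two_pos _).le (h1 _ (Nat.le_add_right S m))) hw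
    have hb : Summable (fun m : ℕ => (A * 2 ^ (-ε * ((S + m : ℕ) : ℝ)) * P + q ^ (N + 1)) *
        (2:ℝ) ^ (-2 * ε * |((S + m : ℕ) : ℝ) - (k : ℝ)|)) := by
      apply ((hu.mul_left (A * P)).add (hw.mul_left (q ^ (N + 1)))).congr
      intro m
      ring
    have hT1 : ∑' m : ℕ, a (S + m) * (2:ℝ) ^ (-2 * ε * |((S + m : ℕ) : ℝ) - (k : ℝ)|) ≤
        ∑' m : ℕ, (A * 2 ^ (-ε * ((S + m : ℕ) : ℝ)) * P + q ^ (N + 1)) *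
          (2:ℝ) ^ (-2 * ε * |((S + m : ℕ) : ℝ) - (k : ℝ)|) := by
      apply Summable.tsum_le_tsum _ haw hb
      intro m
      exact mul_le_mul_of_nonneg_right (ih (S + m) (Nat.le_add_right S m))
        (rpow_pos_of_pos two_pos _).le
    have hu_le : ∑' m : ℕ, (2:ℝ) ^ (-ε * ((S + m : ℕ) : ℝ)) * 2 ^ (-2 * ε * |((S + m : ℕ) : ℝ) - (k : ℝ)|) ≤
        2 ^ (-ε * (k:ℝ)) * C := by
      calc ∑' m : ℕ, (2:ℝ) ^ (-ε * ((S + m : ℕ) : ℝ)) * 2 ^ (-2 * ε * |((S + m : ℕ) : ℝ) - (k : ℝ)|)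
          ≤ ∑' m : ℕ, (2:ℝ) ^ (-ε * (k:ℝ)) * 2 ^ (-ε * |((S + m : ℕ) : ℝ) - (k : ℝ)|) :=
            Summable.tsum_le_tsum hkey hu (hv.mul_left _)
        _ = 2 ^ (-ε * (k:ℝ)) * ∑' m : ℕ, (2:ℝ) ^ (-ε * |((S + m : ℕ) : ℝ) - (k : ℝ)|) := tsum_mul_left
        _ ≤ 2 ^ (-ε * (k:ℝ)) * C := by
            apply mul_le_mul_of_nonneg_left _ (rpow_pos_of_pos two_pos _).le
            exact helper_tsum hεneg hk
    have hw_le : ∑' m : ℕ, (2:ℝ) ^ (-2 * ε * |((S + m : ℕ) : ℝ) - (k : ℝ)|) ≤ C :=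
      (helper_tsum h2e hk).trans hC2
    have hT2 : ∑' m : ℕ, (A * 2 ^ (-ε * ((S + m : ℕ) : ℝ)) * P + q ^ (N + 1)) *
          (2:ℝ) ^ (-2 * ε * |((S + m : ℕ) : ℝ) - (k : ℝ)|) ≤
        A * P * (2 ^ (-ε * (k:ℝ)) * C) + q ^ (N + 1) * C := by
      have heq : ∑' m : ℕ, (A * 2 ^ (-ε * ((S + m : ℕ) : ℝ)) * P + q ^ (N + 1)) *
            (2:ℝ) ^ (-2 * ε * |((S + m : ℕ) : ℝ) - (k : ℝ)|) =
          A * P * ∑' m : ℕ, (2:ℝ) ^ (-ε * ((S + m : ℕ) : ℝ)) * 2 ^ (-2 * ε * |((S + m : ℕ) : ℝ) - (k : ℝ)|) +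
          q ^ (N + 1) * ∑' m : ℕ, (2:ℝ) ^ (-2 * ε * |((S + m : ℕ) : ℝ) - (k : ℝ)|) := by
        rw [← tsum_mul_left, ← tsum_mul_left, ← Summable.tsum_add (hu.mul_left _) (hw.mul_left _)]
        exact tsum_congr fun m => by ring
      rw [heq]
      have h3 : A * P * ∑' m : ℕ, (2:ℝ) ^ (-ε * ((S + m : ℕ) : ℝ)) * 2 ^ (-2 * ε * |((S + m : ℕ) : ℝ) - (k : ℝ)|) ≤
          A * P * (2 ^ (-ε * (k:ℝ)) * C) :=
        mul_le_mul_of_nonneg_left hu_le (by positivity)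
      have h4 : q ^ (N + 1) * ∑' m : ℕ, (2:ℝ) ^ (-2 * ε * |((S + m : ℕ) : ℝ) - (k : ℝ)|) ≤
          q ^ (N + 1) * C := mul_le_mul_of_nonneg_left hw_le (pow_pos hq0 _).le
      linarith
    have hfinal : a k ≤ A * 2 ^ (-ε * (k:ℝ)) + δ * (A * P * (2 ^ (-ε * (k:ℝ)) * C) + q ^ (N + 1) * C) := by
      have := h2 k hk
      have h5 : δ * ∑' m : ℕ, a (S + m) * (2:ℝ) ^ (-2 * ε * |((S + m : ℕ) : ℝ) - (k : ℝ)|) ≤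
          δ * (A * P * (2 ^ (-ε * (k:ℝ)) * C) + q ^ (N + 1) * C) :=
        mul_le_mul_of_nonneg_left (hT1.trans hT2) hδ.le
      linarith
    calc a k ≤ A * 2 ^ (-ε * (k:ℝ)) + δ * (A * P * (2 ^ (-ε * (k:ℝ)) * C) + q ^ (N + 1) * C) := hfinal
      _ = A * 2 ^ (-ε * k) * (∑ m ∈ Finset.range (N + 1 + 1), q ^ m) + q ^ (N + 1 + 1) := by
          rw [geom_sum_succ, ← hPdef, hqdef]
          ring
end
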